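/- arXiv:2004.09711 — 2 statements merged into one kernel-verified Lean document; each statement's English description precedes it below -/
import Mathlib

section
/- For every dominant weight λ and every pair of disjoint subsets I, J with I ∪ J = {1, …, r}, there is a unique point v ∈ V satisfying ⟨v, α_i^∨⟩ = 0 for all i ∈ I and ⟨λ − v, x_j⟩ = 0 for all j ∈ J; moreover this point v lies in IP_λ and is an extreme point (vertex) of IP_λ. -/
def IP {V : Type*} [AddCommGroup V] [Module ℚ V] {r : ℕ}
    (b : Fin r → V) (coroot : Fin r → Module.Dual ℚ V) (lam : V) : Set V :=
  {μ | (∀ i, 0 ≤ coroot i μ) ∧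
    ∃ c : Fin r → ℚ, (∀ i, 0 ≤ c i) ∧ lam - μ = ∑ i, c i • b i}

/-!
The reflections `s_k y = y - ⟨y, α_k^∨⟩ α_k` preserve the finite spanning set `Φ`, so they lie in
its stabilizer in `GL(V)`, which is finite. Averaging a positive definite form over that group gives
a form `B` with `2 B(y, α_k) = ⟨y, α_k^∨⟩ B(α_k, α_k)`. For `μ = ∑ u_k α_k` with `u ≥ 0` and
`⟨μ, α_k^∨⟩ ≤ 0` wherever `u_k ≠ 0` this gives `B(μ, μ) = ∑ u_k B(μ, α_k) ≤ 0`, so `μ = 0`.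
Applied to the negative part of the coordinates of `μ`, it shows that `μ` has nonnegative
coordinates as soon as `⟨μ, α_i^∨⟩ ≥ 0` at every negative coordinate `i`.

For `μ = λ - v` this positivity makes the square linear system
`μ ↦ (⟨μ, α_i^∨⟩)_{i ∈ I}, (x_j(μ))_{j ∉ I}` injective, hence invertible, and it puts its solution
in `IP_λ`. The defining equations of `v` are affine functions that are nonnegative on `IP_λ` and
have `v` as their only common zero there, so `v` is an extreme point.
-/

open Module Pointwise

theorem finite_stabilizer_of_span_eq_top {R M : Type*} [Semiring R] [AddCommMonoid M]
    [Module R M] {Φ : Set M} (hΦ : Φ.Finite) (hspan : Submodule.span R Φ = ⊤) :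
    Finite (MulAction.stabilizer (M ≃ₗ[R] M) Φ) := by
  have : Finite Φ := hΦ
  have hmaps (g : MulAction.stabilizer (M ≃ₗ[R] M) Φ) (β : Φ) : g.1 β ∈ Φ := by
    simpa [MulAction.mem_stabilizer_iff.mp g.2] using Set.smul_mem_smul_set (a := g.1) β.2
  refine Finite.of_injective (fun g (β : Φ) => (⟨g.1 β, hmaps g β⟩ : Φ)) fun g h hgh => ?_
  refine Subtype.ext <| LinearEquiv.toLinearMap_injective <| LinearMap.ext_on hspan fun β hβ => ?_
  exact congrArg Subtype.val (congrFun hgh ⟨β, hβ⟩)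

theorem reflection_mem_stabilizer {R M : Type*} [CommRing R] [AddCommGroup M] [Module R M]
    {x : M} {f : Dual R M} (h : f x = 2) {Φ : Set M} (hΦ : Set.MapsTo (reflection h) Φ Φ) :
    reflection h ∈ MulAction.stabilizer (M ≃ₗ[R] M) Φ := by
  rw [MulAction.mem_stabilizer_iff, ← Set.image_smul]
  exact (bijOn_reflection_of_mapsTo h hΦ).image_eq

theorem LinearMap.BilinForm.two_mul_apply_eq_of_reflection_invariant {R M : Type*} [CommRing R]
    [AddCommGroup M] [Module R M] (B : LinearMap.BilinForm R M) {x : M} {f : Dual R M}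
    (h : f x = 2) (hB : ∀ y z, B (reflection h y) (reflection h z) = B y z) (y : M) :
    2 * B y x = f y * B x x := by
  have := hB y x
  simp only [reflection_apply_self, reflection_apply, map_neg, map_sub, map_smul,
    LinearMap.sub_apply, LinearMap.smul_apply, smul_eq_mul] at this
  linear_combination -this

theorem mem_extremePoints_of_unique_common_zero {𝕜 E κ : Type*} [Field 𝕜] [LinearOrder 𝕜]
    [IsStrictOrderedRing 𝕜] [AddCommGroup E] [Module 𝕜 E] {S : Set E} {v : E}
    (f : κ → E →ᵃ[𝕜] 𝕜) (hf : ∀ k, ∀ y ∈ S, 0 ≤ f k y) (hv : v ∈ S) (hfv : ∀ k, f k v = 0)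
    (huniq : ∀ y ∈ S, (∀ k, f k y = 0) → y = v) : v ∈ S.extremePoints 𝕜 := by
  refine mem_extremePoints.mpr ⟨hv, fun y hy z hz hyz => ?_⟩
  obtain ⟨a, c, ha, hc, hac, rfl⟩ := hyz
  have hzero (k : κ) : f k y = 0 ∧ f k z = 0 := by
    have h := hfv k
    rw [Convex.combo_affine_apply hac, smul_eq_mul, smul_eq_mul,
      add_eq_zero_iff_of_nonneg (mul_nonneg ha.le (hf k y hy)) (mul_nonneg hc.le (hf k z hz)),
      mul_eq_zero, mul_eq_zero] at h
    exact ⟨h.1.resolve_left ha.ne', h.2.resolve_left hc.ne'⟩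
  exact ⟨huniq y hy fun k => (hzero k).1, huniq z hz fun k => (hzero k).2⟩

section RootDatum

variable {𝕜 V ι : Type*} [Field 𝕜] [AddCommGroup V] [Module 𝕜 V]
  (b : Basis ι 𝕜 V) (coroot : ι → Dual 𝕜 V)

noncomputable def corootCoordMap [DecidableEq ι] (I : Finset ι) : V →ₗ[𝕜] ι → 𝕜 :=
  LinearMap.pi fun i => if i ∈ I then coroot i else b.coord i

theorem corootCoordMap_apply [DecidableEq ι] (I : Finset ι) (μ : V) (i : ι) :
    corootCoordMap b coroot I μ i = if i ∈ I then coroot i μ else b.repr μ i := by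
  simp [corootCoordMap, LinearMap.pi_apply, apply_ite (fun f : Dual 𝕜 V => f μ)]

variable [LinearOrder 𝕜] [IsStrictOrderedRing 𝕜]

/-- The second field says `α_k^∨ = 2 B(·, α_k) / B(α_k, α_k)`, i.e. that `B` is invariant under
the simple reflections. -/
structure IsPosDefInvariantForm (B : LinearMap.BilinForm 𝕜 V) : Prop where
  pos : ∀ y, y ≠ 0 → 0 < B y y
  two_mul_apply_root : ∀ k y, 2 * B y (b k) = coroot k y * B (b k) (b k)

theorem exists_bilinForm_pos_invariant [FiniteDimensional 𝕜 V] (G : Subgroup (V ≃ₗ[𝕜] V))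
    [Finite G] :
    ∃ B : LinearMap.BilinForm 𝕜 V, (∀ y, y ≠ 0 → 0 < B y y) ∧
      ∀ g ∈ G, ∀ y z, B (g y) (g z) = B y z := by
  have := Fintype.ofFinite G
  let b := Module.finBasis 𝕜 V
  let B₀ : LinearMap.BilinForm 𝕜 V := ∑ i, (b.coord i).smulRight (b.coord i)
  let B : LinearMap.BilinForm 𝕜 V := ∑ g : G, B₀.compl₁₂ (g : V →ₗ[𝕜] V) (g : V →ₗ[𝕜] V)
  have hB (y z : V) : B y z = ∑ g : G, ∑ i, b.repr (g.1 y) i * b.repr (g.1 z) i := by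
    simp [B, B₀, LinearMap.sum_apply]
  refine ⟨B, fun y hy => ?_, fun h hh y z => ?_⟩
  · obtain ⟨i, hi⟩ : ∃ i, b.repr y i ≠ 0 :=
      DFunLike.ne_iff.mp ((map_ne_zero_iff _ b.repr.injective).mpr hy)
    rw [hB]
    calc 0 < ∑ i, b.repr ((1 : G).1 y) i * b.repr ((1 : G).1 y) i :=
          Finset.sum_pos' (fun j _ => mul_self_nonneg _) ⟨i, Finset.mem_univ _, by simpa using hi⟩
      _ ≤ _ := Finset.single_le_sum (f := fun g : G => ∑ i, b.repr (g.1 y) i * b.repr (g.1 y) i)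
          (fun g _ => Finset.sum_nonneg fun i _ => mul_self_nonneg _) (Finset.mem_univ 1)
  · rw [hB, hB]
    exact Fintype.sum_equiv (Equiv.mulRight ⟨h, hh⟩) _ _ fun g => by simp

theorem exists_isPosDefInvariantForm [Fintype ι] (hdiag : ∀ i, coroot i (b i) = 2) {Φ : Set V}
    (hΦfin : Φ.Finite) (hΦroot : ∀ i, b i ∈ Φ)
    (hΦrefl : ∀ β ∈ Φ, ∀ i, β - coroot i β • b i ∈ Φ) :
    ∃ B, IsPosDefInvariantForm b coroot B := by
  have := Module.Finite.of_basis b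
  have hspan : Submodule.span 𝕜 Φ = ⊤ :=
    top_unique (b.span_eq ▸ Submodule.span_mono (Set.range_subset_iff.mpr hΦroot))
  have := finite_stabilizer_of_span_eq_top hΦfin hspan
  obtain ⟨B, hBpos, hBinv⟩ := exists_bilinForm_pos_invariant (MulAction.stabilizer (V ≃ₗ[𝕜] V) Φ)
  refine ⟨B, hBpos, fun k => B.two_mul_apply_eq_of_reflection_invariant (hdiag k) (hBinv _ ?_)⟩
  exact reflection_mem_stabilizer (hdiag k) fun β hβ => by
    simpa only [reflection_apply] using hΦrefl β hβ k

variable [Fintype ι]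

theorem coroot_sum_nonpos_of_eq_zero (hoff : ∀ i j, i ≠ j → coroot j (b i) ≤ 0)
    {u : ι → 𝕜} (hu : ∀ k, 0 ≤ u k) {i : ι} (hi : u i = 0) :
    coroot i (∑ k, u k • b k) ≤ 0 := by
  rw [map_sum]
  refine Finset.sum_nonpos fun k _ => ?_
  rw [map_smul, smul_eq_mul]
  obtain rfl | hk := eq_or_ne k i
  · rw [hi, zero_mul]
  · exact mul_nonpos_of_nonneg_of_nonpos (hu k) (hoff k i hk)

variable {b coroot} {B : LinearMap.BilinForm 𝕜 V}

theorem IsPosDefInvariantForm.eq_zero_of_coroot_sum_nonpos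
    (hB : IsPosDefInvariantForm b coroot B) {u : ι → 𝕜} (hu : ∀ k, 0 ≤ u k)
    (hsupp : ∀ k, u k ≠ 0 → coroot k (∑ i, u i • b i) ≤ 0) : u = 0 := by
  set μ := ∑ i, u i • b i
  have hterm (k : ι) : u k * B μ (b k) ≤ 0 := by
    obtain hk | hk := eq_or_ne (u k) 0
    · rw [hk, zero_mul]
    · refine mul_nonpos_of_nonneg_of_nonpos (hu k) ?_
      nlinarith [hB.two_mul_apply_root k μ, hsupp k hk, hB.pos (b k) (b.ne_zero k)]
  have hμμ : B μ μ ≤ 0 := by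
    simp only [μ, map_sum (B μ), map_smul, smul_eq_mul]
    exact Finset.sum_nonpos fun k _ => hterm k
  have hμ : μ = 0 := by
    by_contra hμ
    exact (hB.pos μ hμ).not_ge hμμ
  exact funext (Fintype.linearIndependent_iff.mp b.linearIndependent u hμ)

theorem IsPosDefInvariantForm.repr_nonneg (hB : IsPosDefInvariantForm b coroot B)
    (hoff : ∀ i j, i ≠ j → coroot j (b i) ≤ 0)
    {μ : V} (hμ : ∀ i, b.repr μ i < 0 → 0 ≤ coroot i μ) (i : ι) : 0 ≤ b.repr μ i := by
  set c := b.repr μ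
  have hsplit : μ = ∑ k, (c k)⁺ • b k - ∑ k, (c k)⁻ • b k := by
    simp_rw [← Finset.sum_sub_distrib, ← sub_smul, posPart_sub_negPart]
    exact (b.sum_repr μ).symm
  have hneg : (fun k => (c k)⁻) = 0 := by
    refine hB.eq_zero_of_coroot_sum_nonpos (fun k => negPart_nonneg _) fun k hk => ?_
    have hck : c k < 0 := not_le.mp (mt negPart_eq_zero.mpr hk)
    have hpos := coroot_sum_nonpos_of_eq_zero b coroot hoff (fun k => posPart_nonneg (c k))
      (posPart_eq_zero.mpr hck.le)
    have := hμ k hck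
    rw [hsplit, map_sub] at this
    linarith
  exact negPart_eq_zero.mp (congrFun hneg i)

theorem IsPosDefInvariantForm.corootCoordMap_bijective [DecidableEq ι]
    (hB : IsPosDefInvariantForm b coroot B) (hoff : ∀ i j, i ≠ j → coroot j (b i) ≤ 0)
    (I : Finset ι) : Function.Bijective (corootCoordMap b coroot I) := by
  have hinj : Function.Injective (corootCoordMap b coroot I) := by
    refine (injective_iff_map_eq_zero _).mpr fun μ hμ => ?_
    have hμi (i : ι) : corootCoordMap b coroot I μ i = 0 := congrFun hμ i
    simp only [corootCoordMap_apply] at hμi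
    have hnonneg (ν : V) (hν : ν = μ ∨ ν = -μ) (i : ι) : 0 ≤ b.repr ν i := by
      refine hB.repr_nonneg hoff (fun i hi => ?_) i
      have := hμi i
      by_cases hI : i ∈ I <;> rcases hν with rfl | rfl <;> simp_all
    refine b.ext_elem fun i => le_antisymm ?_ (by simpa using hnonneg μ (.inl rfl) i)
    simpa using hnonneg (-μ) (.inr rfl) i
  have := Module.Finite.of_basis b
  refine ⟨hinj, (LinearMap.injective_iff_surjective_of_finrank_eq_finrank ?_).mp hinj⟩
  rw [finrank_eq_card_basis b, finrank_fintype_fun_eq_card]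

theorem IsPosDefInvariantForm.existsUnique_vertex (hB : IsPosDefInvariantForm b coroot B)
    (hoff : ∀ i j, i ≠ j → coroot j (b i) ≤ 0) (I : Finset ι) (lam : V) :
    ∃! v : V, (∀ i ∈ I, coroot i v = 0) ∧ ∀ j ∉ I, b.coord j (lam - v) = 0 := by
  classical
  have hiff (v : V) : ((∀ i ∈ I, coroot i v = 0) ∧ ∀ j ∉ I, b.coord j (lam - v) = 0) ↔
      corootCoordMap b coroot I (lam - v) = fun i => if i ∈ I then coroot i lam else 0 := by
    simp only [funext_iff, corootCoordMap_apply]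
    refine ⟨fun h i => ?_, fun h => ⟨fun i hi => ?_, fun j hj => ?_⟩⟩
    · by_cases hi : i ∈ I
      · simp [hi, h.1 i hi]
      · simpa [hi] using h.2 i hi
    · simpa [hi] using h i
    · simpa [hj] using h j
  have hbij := hB.corootCoordMap_bijective hoff I
  obtain ⟨μ, hμ⟩ := hbij.2 fun i => if i ∈ I then coroot i lam else 0
  refine ⟨lam - μ, (hiff _).mpr (by rwa [sub_sub_cancel]), fun v hv => ?_⟩
  rw [← hbij.1 (((hiff v).mp hv).trans hμ.symm), sub_sub_cancel]

end RootDatum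

section IntersectionPolytope

variable {V : Type*} [AddCommGroup V] [Module ℚ V] {r : ℕ} {b : Basis (Fin r) ℚ V}
  {coroot : Fin r → Dual ℚ V} {lam : V}

theorem coord_sub_nonneg_of_mem_IP {y : V} (hy : y ∈ IP b coroot lam) (i : Fin r) :
    0 ≤ b.coord i (lam - y) := by
  obtain ⟨-, c, hc, hlam⟩ := hy
  rw [hlam, Basis.coord_apply, b.repr_sum_self]
  exact hc i

variable {B : LinearMap.BilinForm ℚ V} {I : Finset (Fin r)} {v : V}

theorem IsPosDefInvariantForm.vertex_mem_IP (hB : IsPosDefInvariantForm b coroot B)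
    (hoff : ∀ i j, i ≠ j → coroot j (b i) ≤ 0) (hlam : ∀ i, 0 ≤ coroot i lam)
    (hI : ∀ i ∈ I, coroot i v = 0) (hIc : ∀ j ∉ I, b.coord j (lam - v) = 0) :
    v ∈ IP b coroot lam := by
  have hc : ∀ i, 0 ≤ b.repr (lam - v) i := hB.repr_nonneg hoff fun i hi => by
    by_cases hiI : i ∈ I
    · rw [map_sub, hI i hiI, sub_zero]
      exact hlam i
    · exact absurd (hIc i hiI) hi.ne
  refine ⟨fun i => ?_, fun i => b.repr (lam - v) i, hc, (b.sum_repr _).symm⟩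
  by_cases hiI : i ∈ I
  · exact (hI i hiI).ge
  · have := coroot_sum_nonpos_of_eq_zero b coroot hoff hc (hIc i hiI)
    rw [b.sum_repr, map_sub] at this
    linarith [hlam i]

theorem IsPosDefInvariantForm.vertex_mem_extremePoints_IP (hB : IsPosDefInvariantForm b coroot B)
    (hoff : ∀ i j, i ≠ j → coroot j (b i) ≤ 0) (hlam : ∀ i, 0 ≤ coroot i lam)
    (hI : ∀ i ∈ I, coroot i v = 0) (hIc : ∀ j ∉ I, b.coord j (lam - v) = 0) :
    v ∈ (IP b coroot lam).extremePoints ℚ := by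
  classical
  let f (i : Fin r) : V →ᵃ[ℚ] ℚ :=
    if i ∈ I then (coroot i).toAffineMap
    else AffineMap.const ℚ V (b.coord i lam) - (b.coord i).toAffineMap
  have hf (i : Fin r) (y : V) :
      f i y = if i ∈ I then coroot i y else b.coord i (lam - y) := by
    by_cases hi : i ∈ I <;> simp [f, hi]
  have hvert (y : V) : (∀ i, f i y = 0) ↔
      (∀ i ∈ I, coroot i y = 0) ∧ ∀ j ∉ I, b.coord j (lam - y) = 0 := by
    simp only [hf]
    exact ⟨fun h => ⟨fun i hi => by simpa [hi] using h i, fun j hj => by simpa [hj] using h j⟩,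
      fun h i => by by_cases hi : i ∈ I <;> simp [hi, h.1, h.2]⟩
  obtain ⟨w, -, hw⟩ := hB.existsUnique_vertex hoff I lam
  refine mem_extremePoints_of_unique_common_zero f (fun i y hy => ?_)
    (hB.vertex_mem_IP hoff hlam hI hIc) ((hvert v).mpr ⟨hI, hIc⟩)
    fun y _ hy => (hw y ((hvert y).mp hy)).trans (hw v ⟨hI, hIc⟩).symm
  rw [hf]
  split_ifs
  · exact hy.1 i
  · exact coord_sub_nonneg_of_mem_IP hy i

end IntersectionPolytope

theorem stmt_2_general {V : Type*} [AddCommGroup V] [Module ℚ V] {r : ℕ}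
    (b : Module.Basis (Fin r) ℚ V) (coroot : Fin r → Module.Dual ℚ V)
    (hdiag : ∀ i, coroot i (b i) = 2)
    (hoff : ∀ i j : Fin r, i ≠ j → coroot j (b i) ≤ 0)
    (Φ : Set V) (hΦfin : Φ.Finite) (hΦroot : ∀ i, b i ∈ Φ)
    (hΦrefl : ∀ β ∈ Φ, ∀ i, β - coroot i β • b i ∈ Φ)
    (x : Fin r → Module.Dual ℚ V)
    (hx : ∀ i j : Fin r, x j (b i) = if i = j then 1 else 0)
    (I J : Finset (Fin r)) (hdisj : Disjoint I J) (hcover : I ∪ J = Finset.univ)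
    (lam : V) (hlam : ∀ i, 0 ≤ coroot i lam) :
    (∃! v : V, (∀ i ∈ I, coroot i v = 0) ∧ (∀ j ∈ J, x j (lam - v) = 0)) ∧
      ∀ v : V, (∀ i ∈ I, coroot i v = 0) → (∀ j ∈ J, x j (lam - v) = 0) →
        v ∈ IP (⇑b) coroot lam ∧ v ∈ (IP (⇑b) coroot lam).extremePoints ℚ := by
  obtain ⟨B, hB⟩ := exists_isPosDefInvariantForm b coroot hdiag hΦfin hΦroot hΦrefl
  have hxcoord (j : Fin r) : x j = b.coord j :=
    b.ext fun i => by simp [hx, Finsupp.single_apply, eq_comm]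
  obtain rfl : J = Iᶜ := (IsCompl.compl_eq ⟨hdisj, codisjoint_iff.mpr hcover⟩).symm
  simp only [hxcoord, Finset.mem_compl]
  exact ⟨hB.existsUnique_vertex hoff I lam, fun v hI hIc =>
    ⟨hB.vertex_mem_IP hoff hlam hI hIc, hB.vertex_mem_extremePoints_IP hoff hlam hI hIc⟩⟩

/-- For every dominant weight `lam` and every pair of disjoint subsets
`I, J` with `I ∪ J = {1, …, r}`, there is a unique point `v` with `⟨v, α_i^∨⟩ = 0` for all
`i ∈ I` and `⟨lam − v, x_j⟩ = 0` for all `j ∈ J`; moreover any such `v` lies in `IP_lam`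
and is an extreme point (vertex) of `IP_lam`. -/
theorem stmt_2 {V : Type*} [AddCommGroup V] [Module ℚ V] {r : ℕ}
    (b : Module.Basis (Fin r) ℚ V) (coroot : Fin r → Module.Dual ℚ V)
    (hdiag : ∀ i, coroot i (b i) = 2)
    (hoff : ∀ i j : Fin r, i ≠ j → coroot j (b i) ≤ 0)
    (hint : ∀ i j : Fin r, ∃ n : ℤ, coroot j (b i) = (n : ℚ))
    (Φ : Set V) (hΦfin : Φ.Finite) (hΦroot : ∀ i, b i ∈ Φ)
    (hΦrefl : ∀ β ∈ Φ, ∀ i, β - coroot i β • b i ∈ Φ)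
    (x : Fin r → Module.Dual ℚ V)
    (hx : ∀ i j : Fin r, x j (b i) = if i = j then 1 else 0)
    (I J : Finset (Fin r)) (hdisj : Disjoint I J) (hcover : I ∪ J = Finset.univ)
    (lam : V) (hlam : ∀ i, 0 ≤ coroot i lam) :
    (∃! v : V, (∀ i ∈ I, coroot i v = 0) ∧ (∀ j ∈ J, x j (lam - v) = 0)) ∧
      ∀ v : V, (∀ i ∈ I, coroot i v = 0) → (∀ j ∈ J, x j (lam - v) = 0) →
        v ∈ IP (⇑b) coroot lam ∧ v ∈ (IP (⇑b) coroot lam).extremePoints ℚ :=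
  stmt_2_general b coroot hdiag hoff Φ hΦfin hΦroot hΦrefl x hx I J hdisj hcover lam hlam
end

section
/- A nonzero pair (λ, μ) ∈ 𝒦 spans an extremal ray of the Kostka cone 𝒦 if and only if there exist an index j, a positive rational c, and an extreme point μ_0 of the intersection polytope IP_{ϖ_j}, such that λ = c·ϖ_j and μ = c·μ_0. -/
/-!
Averaging over the finitely many linear maps that preserve `Φ` gives a positive definite form
`( , )` for which the simple reflections are isometries, i.e.
`⟨v, α_i^∨⟩ (α_i, α_i) = 2 (v, α_i)`. Hence the coroots separate points, no nonzero dominant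
weight is a nonpositive combination of simple roots, and every square system mixing rows of the
Cartan matrix with rows of the identity is nonsingular.

The key step is a decomposition: if `λ₁, λ₂` are dominant and `(λ₁ + λ₂, μ) ∈ 𝒦`, then
`μ = μ₁ + μ₂` with `(λᵢ, μᵢ) ∈ 𝒦`. Write `λ₁ + λ₂ - μ = ∑ c_i α_i` and look for `0 ≤ d ≤ c`
with `λ₁ - ∑ d_i α_i` dominant. A real `d` maximising `∑ d_i` is tight in each coordinate, so it
solves one of the nonsingular rational systems above and is rational; tightness and the
nonpositivity of the Cartan matrix off the diagonal make `λ₂ - ∑ (c_i - d_i) α_i` dominant too.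

Splitting off the `ϖ_j`-part of `λ` then shows that on an extremal ray `λ ∈ ℚ_{>0} ϖ_j`. Over the
ray `ℚ_{≥0} ϖ_j` the cone `𝒦` is the cone over `{ϖ_j} × IP_{ϖ_j}`, pointed since `(0, μ) ∈ 𝒦`
forces `μ = 0`, and the extremal rays of such a cone are spanned by the extreme points of its base.
-/

open Module Matrix Set Filter Topology

/-- The Kostka cone `𝒦 ⊆ V × V`: pairs `(lam, mu)` of dominant weights such that
`lam - mu` is a nonnegative rational combination of the simple roots. -/
def Kostka {V : Type*} [AddCommGroup V] [Module ℚ V] {r : ℕ}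
    (b : Fin r → V) (coroot : Fin r → Module.Dual ℚ V) : Set (V × V) :=
  {p | (∀ i, 0 ≤ coroot i p.1) ∧ (∀ i, 0 ≤ coroot i p.2) ∧
    ∃ c : Fin r → ℚ, (∀ i, 0 ≤ c i) ∧ p.1 - p.2 = ∑ i, c i • b i}

section InvariantForm

variable {R K V ι : Type*} [AddCommGroup V]

section CommRing

variable [CommRing R] [Module R V]

theorem Module.Basis.finite_setOf_mapsTo [Finite ι] (b : Basis ι R V) {Φ : Set V}
    (hΦ : Φ.Finite) (hb : ∀ i, b i ∈ Φ) : {g : V →ₗ[R] V | MapsTo g Φ Φ}.Finite := by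
  have hinj : Function.Injective fun (g : V →ₗ[R] V) i => g (b i) :=
    fun g g' h => b.ext fun i => congrFun h i
  exact ((Set.Finite.pi fun _ => hΦ).preimage hinj.injOn).subset
    fun g hg => Set.mem_univ_pi.2 fun i => hg (hb i)

def averagedForm (B : V →ₗ[R] V →ₗ[R] R) (F : Finset (V →ₗ[R] V)) : V →ₗ[R] V →ₗ[R] R :=
  ∑ g ∈ F, B.compl₁₂ g g

theorem averagedForm_apply (B : V →ₗ[R] V →ₗ[R] R) (F : Finset (V →ₗ[R] V)) (v w : V) :
    averagedForm B F v w = ∑ g ∈ F, B (g v) (g w) := by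
  simp [averagedForm, LinearMap.sum_apply]

theorem averagedForm_apply_apply_of_involutive (B : V →ₗ[R] V →ₗ[R] R) {F : Finset (V →ₗ[R] V)}
    {σ : V →ₗ[R] V} (hσ : Function.Involutive σ) (hF : ∀ g ∈ F, g ∘ₗ σ ∈ F) (v w : V) :
    averagedForm B F (σ v) (σ w) = averagedForm B F v w := by
  simp only [averagedForm_apply]
  refine Finset.sum_nbij' (· ∘ₗ σ) (· ∘ₗ σ) hF hF ?_ ?_ fun g _ => rfl <;>
    · intro g _
      ext v
      simp [hσ v]

theorem Module.Basis.toDual_self_eq_sum [Fintype ι] [DecidableEq ι] (b : Basis ι R V) (v : V) :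
    b.toDual v v = ∑ i, b.repr v i * b.repr v i := by
  nth_rewrite 2 [← b.sum_repr v]
  simp only [map_sum, map_smul, Basis.toDual_apply_left, smul_eq_mul]

end CommRing

variable [Field K] [LinearOrder K] [IsStrictOrderedRing K] [Module K V]

theorem Module.Basis.toDual_self_pos [Fintype ι] [DecidableEq ι] (b : Basis ι K V) {v : V}
    (hv : v ≠ 0) : 0 < b.toDual v v := by
  rw [b.toDual_self_eq_sum]
  obtain ⟨i, hi⟩ : ∃ i, b.repr v i ≠ 0 := by
    by_contra! h
    exact hv (b.forall_coord_eq_zero_iff.1 h)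
  exact Finset.sum_pos' (fun j _ => mul_self_nonneg _) ⟨i, Finset.mem_univ i, mul_self_pos.2 hi⟩

theorem averagedForm_self_pos {B : V →ₗ[K] V →ₗ[K] K} (hB : ∀ v, v ≠ 0 → 0 < B v v)
    {F : Finset (V →ₗ[K] V)} (hF : LinearMap.id ∈ F) {v : V} (hv : v ≠ 0) :
    0 < averagedForm B F v v := by
  rw [averagedForm_apply]
  refine Finset.sum_pos' (fun g _ => ?_) ⟨_, hF, hB v hv⟩
  rcases eq_or_ne (g v) 0 with h | h
  · simp [h]
  · exact (hB _ h).le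

theorem exists_posDef_form_coroot [Fintype ι] (b : Basis ι K V) (coroot : ι → Dual K V)
    (hdiag : ∀ i, coroot i (b i) = 2) {Φ : Set V} (hΦ : Φ.Finite) (hΦroot : ∀ i, b i ∈ Φ)
    (hΦrefl : ∀ β ∈ Φ, ∀ i, β - coroot i β • b i ∈ Φ) :
    ∃ B : V →ₗ[K] V →ₗ[K] K,
      (∀ v, v ≠ 0 → 0 < B v v) ∧ ∀ i v, coroot i v * B (b i) (b i) = 2 * B v (b i) := by
  classical
  set F := (b.finite_setOf_mapsTo hΦ hΦroot).toFinset
  have hF : ∀ g, g ∈ F ↔ MapsTo g Φ Φ := fun g => Set.Finite.mem_toFinset _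
  refine ⟨averagedForm b.toDual F,
    fun v hv => averagedForm_self_pos (fun _ => b.toDual_self_pos) ((hF _).2 (mapsTo_id Φ)) hv,
    fun i v => ?_⟩
  have hσ (w : V) : reflection (hdiag i) w = w - coroot i w • b i := reflection_apply w (hdiag i)
  have hinv := averagedForm_apply_apply_of_involutive b.toDual (involutive_reflection (hdiag i))
    (fun g hg => (hF _).2 (((hF g).1 hg).comp fun β hβ => by
      simpa [hσ] using hΦrefl β hβ i)) v (b i)
  simp only [LinearEquiv.coe_coe, hσ, hdiag, map_sub, map_smul,
    LinearMap.sub_apply, LinearMap.smul_apply, smul_eq_mul] at hinv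
  linarith

end InvariantForm

section PositiveForm

variable {K V ι : Type*} [Field K] [LinearOrder K] [IsStrictOrderedRing K]
  [AddCommGroup V] [Module K V] [Fintype ι] {b : Basis ι K V} {coroot : ι → Dual K V}
  {B : V →ₗ[K] V →ₗ[K] K}

theorem eq_zero_of_forall_eq_zero_or_coroot_eq_zero (hB : ∀ v, v ≠ 0 → 0 < B v v)
    (hBc : ∀ i v, coroot i v * B (b i) (b i) = 2 * B v (b i)) (u : ι → K)
    (hu : ∀ j, u j = 0 ∨ coroot j (∑ i, u i • b i) = 0) : u = 0 := by
  have hv : ∑ i, u i • b i = 0 := by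
    by_contra hv
    have hlin (w : V) : 2 * B w (∑ i, u i • b i) = ∑ j, u j * (2 * B w (b j)) := by
      simp only [map_sum, map_smul, smul_eq_mul, Finset.mul_sum]
      ring_nf
    have hzero : 2 * B (∑ i, u i • b i) (∑ i, u i • b i) = 0 := by
      rw [hlin]
      refine Finset.sum_eq_zero fun j _ => ?_
      rcases hu j with h | h
      · simp [h]
      · rw [← hBc, h]; ring
    linarith [hB _ hv]
  exact funext (Fintype.linearIndependent_iff.1 b.linearIndependent u hv)

theorem eq_zero_of_forall_coroot_eq_zero (hB : ∀ v, v ≠ 0 → 0 < B v v)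
    (hBc : ∀ i v, coroot i v * B (b i) (b i) = 2 * B v (b i)) {v : V}
    (hv : ∀ i, coroot i v = 0) : v = 0 := by
  have := eq_zero_of_forall_eq_zero_or_coroot_eq_zero hB hBc (b.repr v)
    fun j => .inr (by rw [b.sum_repr]; exact hv j)
  simpa using this

theorem eq_zero_of_dominant_of_neg_eq_sum (hB : ∀ v, v ≠ 0 → 0 < B v v)
    (hBc : ∀ i v, coroot i v * B (b i) (b i) = 2 * B v (b i)) {m : V} {e : ι → K}
    (hm : ∀ i, 0 ≤ coroot i m) (he : ∀ i, 0 ≤ e i) (h : -m = ∑ i, e i • b i) : m = 0 := by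
  by_contra hm0
  have hexp : 2 * B m (-m) = ∑ i, e i * (coroot i m * B (b i) (b i)) := by
    simp only [h, map_sum, map_smul, smul_eq_mul, Finset.mul_sum, hBc]; ring_nf
  have hnonneg : 0 ≤ ∑ i, e i * (coroot i m * B (b i) (b i)) :=
    Finset.sum_nonneg fun i _ => mul_nonneg (he i) (mul_nonneg (hm i) (hB _ (b.ne_zero i)).le)
  rw [map_neg] at hexp
  linarith [hB m hm0]

end PositiveForm

namespace Matrix

variable {ι : Type*} [DecidableEq ι]

theorem exists_tight_of_offDiag_nonpos [Fintype ι] {N : Matrix ι ι ℝ}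
    (hN : ∀ i j, i ≠ j → N i j ≤ 0) {c x : ι → ℝ} (hc : 0 ≤ c) (hx : 0 ≤ x) :
    ∃ d, 0 ≤ d ∧ d ≤ c ∧ N *ᵥ d ≤ x ∧ ∀ j, d j = c j ∨ (N *ᵥ d) j = x j := by
  set S := Set.Icc 0 c ∩ {d | N *ᵥ d ≤ x}
  have hS : IsCompact S := isCompact_Icc.inter_right
    (isClosed_le (continuous_const.matrix_mulVec continuous_id) continuous_const)
  obtain ⟨d, ⟨⟨hd0, hdc⟩, hdx⟩, hmax⟩ := hS.exists_isMaxOn ⟨0, ⟨le_rfl, hc⟩, by simpa using hx⟩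
    (continuous_finsetSum Finset.univ fun i _ => continuous_apply i).continuousOn
  refine ⟨d, hd0, hdc, hdx, fun j => ?_⟩
  by_contra! h
  have hcj : d j < c j := (hdc j).lt_of_ne h.1
  have hxj : (N *ᵥ d) j < x j := (hdx j).lt_of_ne h.2
  -- otherwise `d` could be pushed up in the `j`-th coordinate, staying in `S`
  obtain ⟨t, ⟨htc, htx⟩, ht⟩ : ∃ t, (t < c j - d j ∧ (N *ᵥ d) j + N j j * t < x j) ∧ 0 < t := by
    have hev : ∀ᶠ t in 𝓝 (0 : ℝ), t < c j - d j ∧ (N *ᵥ d) j + N j j * t < x j :=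
      (eventually_lt_nhds (sub_pos.2 hcj)).and
        (ContinuousAt.eventually_lt (by fun_prop) continuousAt_const (by simpa using hxj))
    exact ((hev.filter_mono nhdsWithin_le_nhds).and (self_mem_nhdsWithin (s := Set.Ioi 0))).exists
  have hmem : d + Pi.single j t ∈ S := by
    refine ⟨⟨add_nonneg hd0 (Pi.single_nonneg.2 ht.le), fun i => ?_⟩, fun k => ?_⟩
    · rcases eq_or_ne i j with rfl | hij
      · simp only [Pi.add_apply, Pi.single_eq_same]; linarith
      · simpa [Pi.single_eq_of_ne hij] using hdc i
    · rw [mulVec_add, Pi.add_apply, mulVec_single]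
      rcases eq_or_ne k j with rfl | hkj
      · simpa [mul_comm] using htx.le
      · have := mul_nonpos_of_nonpos_of_nonneg (hN k j hkj) ht.le
        simp only [Pi.smul_apply, col_apply, op_smul_eq_mul]
        linarith [hdx k]
  have hgain : ∑ i, (d + Pi.single j t : ι → ℝ) i = ∑ i, d i + t := by
    simp [Finset.sum_add_distrib]
  have hle : ∑ i, (d + Pi.single j t : ι → ℝ) i ≤ ∑ i, d i := hmax hmem
  linarith

theorem exists_comp_eq_of_map_mulVec_eq [Fintype ι] {K L : Type*} [Field K] [Field L] (f : K →+* L)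
    {P : Matrix ι ι K} (hP : Function.Injective P.mulVec) {d : ι → L} {v : ι → K}
    (h : P.map f *ᵥ d = f ∘ v) : ∃ q, d = f ∘ q := by
  have hU := mulVec_injective_iff_isUnit.1 hP
  obtain ⟨q, hq⟩ := mulVec_surjective_iff_isUnit.2 hU v
  refine ⟨q, mulVec_injective_iff_isUnit.2 (hU.map f.mapMatrix) ?_⟩
  change P.map f *ᵥ d = P.map f *ᵥ (f ∘ q)
  rw [h]
  funext i
  rw [← RingHom.map_mulVec, hq, Function.comp_apply]

theorem mulVec_of_ite_apply [Fintype ι] {R : Type*} [NonAssocSemiring R] (p : ι → Prop)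
    [DecidablePred p] (N : Matrix ι ι R) (u : ι → R) (j : ι) :
    (of (fun j => if p j then N j else Pi.single j 1) *ᵥ u) j =
      if p j then (N *ᵥ u) j else u j := by
  split_ifs with h <;> simp [mulVec, h]

theorem map_of_ite {R S : Type*} [NonAssocSemiring R] [NonAssocSemiring S] (f : R →+* S)
    (p : ι → Prop) [DecidablePred p] (N : Matrix ι ι R) :
    (of fun j => if p j then N j else Pi.single j 1).map f =
      of fun j => if p j then N.map f j else Pi.single j 1 := by
  ext j i
  by_cases h : p j <;> simp [h, Pi.single_apply, apply_ite f]

theorem exists_tight_of_offDiag_nonpos_rat [Fintype ι] {N : Matrix ι ι ℚ}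
    (hN : ∀ i j, i ≠ j → N i j ≤ 0) (hP : ∀ u, (∀ j, u j = 0 ∨ (N *ᵥ u) j = 0) → u = 0)
    {c x : ι → ℚ} (hc : 0 ≤ c) (hx : 0 ≤ x) :
    ∃ d, 0 ≤ d ∧ d ≤ c ∧ N *ᵥ d ≤ x ∧ ∀ j, d j = c j ∨ (N *ᵥ d) j = x j := by
  classical
  set f := Rat.castHom ℝ
  have hcast (u : ι → ℚ) : N.map f *ᵥ (f ∘ u) = f ∘ (N *ᵥ u) :=
    funext fun j => (RingHom.map_mulVec f N u j).symm
  obtain ⟨d, hd0, hdc, hdx, htight⟩ := exists_tight_of_offDiag_nonpos (N := N.map f)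
    (fun i j h => by simpa [f] using hN i j h) (c := f ∘ c) (x := f ∘ x)
    (fun i => by simpa [f] using hc i) (fun i => by simpa [f] using hx i)
  -- `d` solves the rational system made of the tight rows of `N` and of the identity
  set T : ι → Prop := fun j => (N.map f *ᵥ d) j = f (x j)
  set P : Matrix ι ι ℚ := of fun j => if T j then N j else Pi.single j 1
  have hPinj : Function.Injective P.mulVec := by
    have hker (u : ι → ℚ) (hu : P *ᵥ u = 0) : u = 0 := hP u fun j => by
      have := congrFun hu j
      rw [mulVec_of_ite_apply] at this
      split_ifs at this <;> tauto
    exact fun u w h => sub_eq_zero.1 (hker _ (by rw [mulVec_sub, h, sub_self]))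
  obtain ⟨q, rfl⟩ := exists_comp_eq_of_map_mulVec_eq f hPinj (d := d)
    (v := fun j => if T j then x j else c j) (by
      funext j
      rw [map_of_ite, mulVec_of_ite_apply]
      by_cases hj : T j
      · simpa only [if_pos hj, Function.comp_apply] using hj
      · simpa only [if_neg hj, Function.comp_apply] using (htight j).resolve_right hj)
  rw [hcast] at hdx htight
  refine ⟨q, fun i => ?_, fun i => ?_, fun j => ?_, fun j => ?_⟩
  · simpa [f] using hd0 i
  · simpa [f] using hdc i
  · simpa [f] using hdx j
  · simpa [f] using htight j

theorem exists_split_of_offDiag_nonpos [Fintype ι] {N : Matrix ι ι ℚ}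
    (hN : ∀ i j, i ≠ j → N i j ≤ 0) (hP : ∀ u, (∀ j, u j = 0 ∨ (N *ᵥ u) j = 0) → u = 0)
    {c x y : ι → ℚ} (hc : 0 ≤ c) (hx : 0 ≤ x) (hy : 0 ≤ y) (hcxy : N *ᵥ c ≤ x + y) :
    ∃ d, 0 ≤ d ∧ d ≤ c ∧ N *ᵥ d ≤ x ∧ N *ᵥ (c - d) ≤ y := by
  obtain ⟨d, hd0, hdc, hdx, htight⟩ := exists_tight_of_offDiag_nonpos_rat hN hP hc hx
  refine ⟨d, hd0, hdc, hdx, fun j => ?_⟩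
  rcases htight j with h | h
  · have : (N *ᵥ (c - d)) j ≤ 0 := Finset.sum_nonpos fun i _ => by
      rcases eq_or_ne j i with rfl | hji
      · simp [h]
      · exact mul_nonpos_of_nonpos_of_nonneg (hN j i hji) (sub_nonneg.2 (hdc i))
    exact this.trans (hy j)
  · have := hcxy j
    simp only [Pi.add_apply] at this
    simp only [mulVec_sub, Pi.sub_apply, h]
    linarith

end Matrix

def SpansExtremalRay (K : Type*) {M : Type*} [Semiring K] [PartialOrder K] [AddCommMonoid M]
    [Module K M] (C : Set M) (x : M) : Prop :=
  ∀ p q, p ∈ C → q ∈ C → p + q = x →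
    (∃ c : K, 0 ≤ c ∧ p = c • x) ∧ ∃ c : K, 0 ≤ c ∧ q = c • x

section ExtremalRay

variable {K E F : Type*} [Field K] [LinearOrder K] [IsStrictOrderedRing K]
  [AddCommGroup E] [Module K E] [AddCommGroup F] [Module K F]

theorem mem_extremePoints_of_spansExtremalRay_smul {C : Set (E × F)} {w : E} {μ₀ : F} {c : K}
    (hsmul : ∀ t : K, 0 ≤ t → ∀ p ∈ C, t • p ∈ C) (hw : w ≠ 0) (hc : 0 < c)
    (hx : (c • w, c • μ₀) ∈ C) (hext : SpansExtremalRay K C (c • w, c • μ₀)) :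
    μ₀ ∈ {ν | (w, ν) ∈ C}.extremePoints K := by
  refine ⟨by simpa [smul_smul, hc.ne'] using hsmul c⁻¹ (by positivity) _ hx,
    fun ν₁ h₁ ν₂ h₂ ⟨a₁, a₂, ha₁, ha₂, hsum, hcomb⟩ => ?_⟩
  have hdecomp : (c * a₁) • (w, ν₁) + (c * a₂) • (w, ν₂) = (c • w, c • μ₀) := by
    rw [← hcomb]
    ext
    · simp only [Prod.fst_add, Prod.smul_fst, ← add_smul, ← mul_add, hsum, mul_one]
    · simp only [Prod.snd_add, Prod.smul_snd]; module
  obtain ⟨⟨s, -, hs⟩, -⟩ := hext _ _ (hsmul _ (by positivity) _ h₁)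
    (hsmul _ (by positivity) _ h₂) hdecomp
  have hs₁ : (c * a₁) • w = (s * c) • w := by simpa [smul_smul] using congrArg Prod.fst hs
  have hs₂ : (c * a₁) • ν₁ = (s * c) • μ₀ := by simpa [smul_smul] using congrArg Prod.snd hs
  rw [← smul_left_injective K hw hs₁] at hs₂
  exact smul_right_injective F (by positivity) hs₂

theorem spansExtremalRay_smul_of_mem_extremePoints {C : Set (E × F)} {w : E} {μ₀ : F} {c : K}
    (hsmul : ∀ t : K, 0 ≤ t → ∀ p ∈ C, t • p ∈ C) (hpointed : ∀ p ∈ C, p.1 = 0 → p = 0)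
    (hface : ∀ p ∈ C, ∀ q ∈ C, ∀ s : K, p.1 + q.1 = s • w → ∃ t : K, 0 ≤ t ∧ p.1 = t • w)
    (hw : w ≠ 0) (hc : 0 < c) (hμ₀ : μ₀ ∈ {ν | (w, ν) ∈ C}.extremePoints K) :
    SpansExtremalRay K C (c • w, c • μ₀) := by
  intro p q hp hq hpq
  obtain ⟨t, ht, hpt⟩ := hface p hp q hq c (by rw [← Prod.fst_add, hpq])
  obtain ⟨t', ht', hqt⟩ := hface q hq p hp c (by rw [← Prod.fst_add, add_comm, hpq])
  have htt : t + t' = c := smul_left_injective K hw <| by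
    simp only [add_smul, ← hpt, ← hqt, ← Prod.fst_add, hpq]
  suffices hp₂ : p.2 = t • μ₀ by
    have hq₂ : q.2 = t' • μ₀ := by
      have h₂ := congrArg Prod.snd hpq
      rw [Prod.snd_add] at h₂
      rw [eq_sub_of_add_eq' h₂, hp₂, ← htt]
      module
    have hmul (r : E × F) (s : K) (h₁ : r.1 = s • w) (h₂ : r.2 = s • μ₀) :
        r = (s / c) • (c • w, c • μ₀) := by
      ext <;> simp [h₁, h₂, smul_smul, div_mul_cancel₀ _ hc.ne']
    exact ⟨⟨_, by positivity, hmul p t hpt hp₂⟩, ⟨_, by positivity, hmul q t' hqt hq₂⟩⟩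
  rcases ht.eq_or_lt with rfl | ht
  · simp [hpointed p hp (by simpa using hpt)]
  rcases ht'.eq_or_lt with rfl | ht'
  · have hq₀ := hpointed q hq (by simpa using hqt)
    rw [hq₀, add_zero] at hpq
    simp [hpq, ← htt]
  have hν (r : E × F) (s : K) (hs : 0 < s) (hr : r ∈ C) (h : r.1 = s • w) :
      (w, s⁻¹ • r.2) ∈ C := by
    convert hsmul s⁻¹ (by positivity) r hr using 1
    ext <;> simp [h, smul_smul, hs.ne']
  have hseg : μ₀ ∈ openSegment K (t⁻¹ • p.2) (t'⁻¹ • q.2) := by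
    refine ⟨t / c, t' / c, by positivity, by positivity, by
      rw [← add_div, htt, div_self hc.ne'], ?_⟩
    rw [smul_smul, smul_smul, div_mul_eq_mul_div, div_mul_eq_mul_div, mul_inv_cancel₀ ht.ne',
      mul_inv_cancel₀ ht'.ne', ← smul_add, ← Prod.snd_add, hpq, one_div, inv_smul_smul₀ hc.ne']
  have := hμ₀.2 (hν p t ht hp hpt) (hν q t' ht' hq hqt) hseg
  rw [← this, smul_inv_smul₀ ht.ne']

end ExtremalRay

section Cartan

variable {R V ι : Type*} [CommRing R] [AddCommGroup V] [Module R V]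

def cartanMatrix (b : ι → V) (coroot : ι → Dual R V) : Matrix ι ι R :=
  .of fun j i => coroot j (b i)

theorem cartanMatrix_mulVec_apply [Fintype ι] (b : ι → V) (coroot : ι → Dual R V) (u : ι → R)
    (j : ι) :
    (cartanMatrix b coroot *ᵥ u) j = coroot j (∑ i, u i • b i) := by
  simp [cartanMatrix, mulVec, dotProduct, map_sum, mul_comm]

theorem coroot_smul_fundWeight [DecidableEq ι] {coroot : ι → Dual R V} {ϖ : ι → V}
    (hϖ : ∀ i j, coroot j (ϖ i) = if i = j then 1 else 0) (c : R) (i j : ι) :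
    coroot j (c • ϖ i) = if i = j then c else 0 := by
  simp [hϖ]

end Cartan

section FundamentalWeights

variable {K V ι : Type*} [Field K] [LinearOrder K] [IsStrictOrderedRing K]
  [AddCommGroup V] [Module K V] [DecidableEq ι] {coroot : ι → Dual K V}

theorem eq_coroot_smul_of_add_eq_smul_fundWeight (hsep : ∀ v, (∀ i, coroot i v = 0) → v = 0)
    {ϖ : ι → V} (hϖ : ∀ i j, coroot j (ϖ i) = if i = j then 1 else 0) {l₁ l₂ : V}
    (h₁ : ∀ i, 0 ≤ coroot i l₁) (h₂ : ∀ i, 0 ≤ coroot i l₂) {j : ι} {s : K}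
    (h : l₁ + l₂ = s • ϖ j) : l₁ = coroot j l₁ • ϖ j := by
  refine sub_eq_zero.1 (hsep _ fun k => ?_)
  rw [map_sub, coroot_smul_fundWeight hϖ]
  split_ifs with hjk
  · rw [hjk, sub_self]
  · have := congrArg (coroot k) h
    rw [map_add, coroot_smul_fundWeight hϖ, if_neg hjk] at this
    linarith [h₁ k, h₂ k]

end FundamentalWeights

section KostkaCone

variable {V : Type*} [AddCommGroup V] [Module ℚ V] {r : ℕ} {coroot : Fin r → Dual ℚ V}

theorem smul_mem_Kostka {b : Fin r → V} {t : ℚ} (ht : 0 ≤ t) {p : V × V}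
    (hp : p ∈ Kostka b coroot) : t • p ∈ Kostka b coroot := by
  obtain ⟨h₁, h₂, e, he, hsum⟩ := hp
  refine ⟨fun i => ?_, fun i => ?_, fun i => t * e i, fun i => mul_nonneg ht (he i), ?_⟩
  · simpa using mul_nonneg ht (h₁ i)
  · simpa using mul_nonneg ht (h₂ i)
  · simp [← smul_sub, hsum, Finset.smul_sum, smul_smul]

theorem setOf_mk_mem_Kostka_eq_IP {b : Fin r → V} {lam : V} (hlam : ∀ i, 0 ≤ coroot i lam) :
    {ν | (lam, ν) ∈ Kostka b coroot} = IP b coroot lam := by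
  ext ν
  simp [Kostka, IP, hlam]

theorem eq_zero_of_mem_Kostka_of_fst_eq_zero {b : Basis (Fin r) ℚ V} {B : V →ₗ[ℚ] V →ₗ[ℚ] ℚ}
    (hB : ∀ v, v ≠ 0 → 0 < B v v) (hBc : ∀ i v, coroot i v * B (b i) (b i) = 2 * B v (b i))
    {p : V × V} (hp : p ∈ Kostka b coroot) (h : p.1 = 0) : p = 0 := by
  obtain ⟨-, h₂, e, he, hsum⟩ := hp
  rw [h, zero_sub] at hsum
  exact Prod.ext h (eq_zero_of_dominant_of_neg_eq_sum hB hBc h₂ he hsum)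

theorem exists_add_eq_of_mem_Kostka {b : Fin r → V} (hoff : ∀ i j, i ≠ j → coroot j (b i) ≤ 0)
    (hP : ∀ u : Fin r → ℚ, (∀ j, u j = 0 ∨ coroot j (∑ i, u i • b i) = 0) → u = 0)
    {l₁ l₂ m : V} (h₁ : ∀ i, 0 ≤ coroot i l₁) (h₂ : ∀ i, 0 ≤ coroot i l₂)
    (h : (l₁ + l₂, m) ∈ Kostka b coroot) :
    ∃ m₁ m₂, m₁ + m₂ = m ∧ (l₁, m₁) ∈ Kostka b coroot ∧ (l₂, m₂) ∈ Kostka b coroot := by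
  obtain ⟨-, hm, c, hc, hsum⟩ := h
  dsimp only at hm hsum
  have hN := cartanMatrix_mulVec_apply b coroot
  obtain ⟨d, hd0, hdc, hdx, hdy⟩ := exists_split_of_offDiag_nonpos (N := cartanMatrix b coroot)
    (fun j i h => hoff i j h.symm) (fun u hu => hP u fun j => by rw [← hN]; exact hu j)
    (c := c) (x := fun j => coroot j l₁) (y := fun j => coroot j l₂) hc h₁ h₂ fun j => by
      simp only [hN, ← hsum, map_sub, map_add, Pi.add_apply]
      linarith [hm j]
  refine ⟨l₁ - ∑ i, d i • b i, l₂ - ∑ i, (c - d) i • b i, ?_, ⟨h₁, fun j => ?_, d, hd0, ?_⟩,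
    ⟨h₂, fun j => ?_, c - d, sub_nonneg.2 hdc, ?_⟩⟩
  · simp only [Pi.sub_apply, sub_smul, Finset.sum_sub_distrib]
    rw [← hsum]
    abel
  · rw [map_sub, ← hN]
    exact sub_nonneg.2 (hdx j)
  · rw [sub_sub_cancel]
  · rw [map_sub, ← hN]
    exact sub_nonneg.2 (hdy j)
  · rw [sub_sub_cancel]

end KostkaCone

section ExtremalRaysOfKostka

variable {V : Type*} [AddCommGroup V] [Module ℚ V] {r : ℕ} {b : Fin r → V}
  {coroot : Fin r → Dual ℚ V} {ϖ : Fin r → V}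

theorem exists_eq_smul_fundWeight_of_spansExtremalRay (hoff : ∀ i j, i ≠ j → coroot j (b i) ≤ 0)
    (hP : ∀ u : Fin r → ℚ, (∀ j, u j = 0 ∨ coroot j (∑ i, u i • b i) = 0) → u = 0)
    (hsep : ∀ v, (∀ i, coroot i v = 0) → v = 0)
    (hϖ : ∀ i j, coroot j (ϖ i) = if i = j then 1 else 0) {lam mu : V}
    (hK : (lam, mu) ∈ Kostka b coroot) (hext : SpansExtremalRay ℚ (Kostka b coroot) (lam, mu))
    (hlam : lam ≠ 0) : ∃ j, ∃ c : ℚ, 0 < c ∧ lam = c • ϖ j := by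
  obtain ⟨j, hj⟩ : ∃ j, coroot j lam ≠ 0 := by
    by_contra! h
    exact hlam (hsep lam h)
  refine ⟨j, coroot j lam, (hK.1 j).lt_of_ne' hj, ?_⟩
  -- split off the `ϖ j`-part of `lam`; extremality forces it to be all of `lam`
  set l₁ := coroot j lam • ϖ j
  have hl₁ (i : Fin r) : coroot i l₁ = if j = i then coroot j lam else 0 :=
    coroot_smul_fundWeight hϖ _ j i
  obtain ⟨m₁, m₂, hm, hK₁, hK₂⟩ := exists_add_eq_of_mem_Kostka hoff hP (l₁ := l₁) (l₂ := lam - l₁)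
    (fun i => by rw [hl₁]; split_ifs <;> simp [hK.1 j])
    (fun i => by
      rw [map_sub, hl₁]
      split_ifs with h
      · rw [h, sub_self]
      · simpa using hK.1 i)
    (by rwa [add_sub_cancel])
  obtain ⟨⟨s, -, hs⟩, -⟩ := hext _ _ hK₁ hK₂ (by rw [Prod.mk_add_mk, add_sub_cancel, hm])
  have hl₁s : l₁ = s • lam := congrArg Prod.fst hs
  have hs1 : s = 1 := by
    have := congrArg (coroot j) hl₁s
    rw [hl₁, if_pos rfl, map_smul, smul_eq_mul] at this
    exact (mul_eq_right₀ hj).1 this.symm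
  rw [hl₁s, hs1, one_smul]

theorem spansExtremalRay_Kostka_smul_iff (hsep : ∀ v, (∀ i, coroot i v = 0) → v = 0)
    (hpointed : ∀ p ∈ Kostka b coroot, p.1 = 0 → p = 0)
    (hϖ : ∀ i j, coroot j (ϖ i) = if i = j then 1 else 0) {j : Fin r} {c : ℚ} {μ₀ : V}
    (hc : 0 < c) (hK : (c • ϖ j, c • μ₀) ∈ Kostka b coroot) :
    SpansExtremalRay ℚ (Kostka b coroot) (c • ϖ j, c • μ₀) ↔
      μ₀ ∈ (IP b coroot (ϖ j)).extremePoints ℚ := by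
  rw [← setOf_mk_mem_Kostka_eq_IP fun i => by rw [hϖ]; split_ifs <;> norm_num]
  have hsmul (t : ℚ) (ht : 0 ≤ t) (p : V × V) (hp : p ∈ Kostka b coroot) :=
    smul_mem_Kostka ht hp
  have hw : ϖ j ≠ 0 := fun h => by simpa [h] using hϖ j j
  exact ⟨mem_extremePoints_of_spansExtremalRay_smul hsmul hw hc hK,
    spansExtremalRay_smul_of_mem_extremePoints hsmul hpointed (fun p hp q hq s h =>
      ⟨_, hp.1 j, eq_coroot_smul_of_add_eq_smul_fundWeight hsep hϖ hp.1 hq.1 h⟩) hw hc⟩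

end ExtremalRaysOfKostka

theorem stmt_10_general {V : Type*} [AddCommGroup V] [Module ℚ V] {r : ℕ}
    (b : Module.Basis (Fin r) ℚ V) (coroot : Fin r → Module.Dual ℚ V)
    (hdiag : ∀ i, coroot i (b i) = 2)
    (hoff : ∀ i j : Fin r, i ≠ j → coroot j (b i) ≤ 0)
    (Φ : Set V) (hΦfin : Φ.Finite) (hΦroot : ∀ i, b i ∈ Φ)
    (hΦrefl : ∀ β ∈ Φ, ∀ i, β - coroot i β • b i ∈ Φ)
    (ϖ : Fin r → V)
    (hϖ : ∀ i j : Fin r, coroot j (ϖ i) = if i = j then 1 else 0)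
    (lam mu : V)
    (hK : (lam, mu) ∈ Kostka (⇑b) coroot)
    (hne : (lam, mu) ≠ (0 : V × V)) :
    (∀ p q : V × V, p ∈ Kostka (⇑b) coroot → q ∈ Kostka (⇑b) coroot →
      p + q = (lam, mu) →
        (∃ c : ℚ, 0 ≤ c ∧ p = c • (lam, mu)) ∧
        (∃ c : ℚ, 0 ≤ c ∧ q = c • (lam, mu)))
    ↔ ∃ (j : Fin r) (c : ℚ) (μ₀ : V), 0 < c ∧
        μ₀ ∈ (IP (⇑b) coroot (ϖ j)).extremePoints ℚ ∧
        lam = c • ϖ j ∧ mu = c • μ₀ := by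
  obtain ⟨B, hB, hBc⟩ := exists_posDef_form_coroot b coroot hdiag hΦfin hΦroot hΦrefl
  have hsep (v : V) : (∀ i, coroot i v = 0) → v = 0 := eq_zero_of_forall_coroot_eq_zero hB hBc
  have hP := eq_zero_of_forall_eq_zero_or_coroot_eq_zero hB hBc
  have hpointed (p : V × V) (hp : p ∈ Kostka b coroot) : p.1 = 0 → p = 0 :=
    eq_zero_of_mem_Kostka_of_fst_eq_zero hB hBc hp
  change SpansExtremalRay ℚ (Kostka b coroot) (lam, mu) ↔ _
  constructor
  · intro hext
    obtain ⟨j, c, hc, rfl⟩ := exists_eq_smul_fundWeight_of_spansExtremalRay hoff hP hsep hϖ hK hext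
      fun h => hne (hpointed _ hK h)
    obtain ⟨μ₀, rfl⟩ : ∃ μ₀, mu = c • μ₀ := ⟨c⁻¹ • mu, (smul_inv_smul₀ hc.ne' mu).symm⟩
    exact ⟨j, c, μ₀, hc, (spansExtremalRay_Kostka_smul_iff hsep hpointed hϖ hc hK).1 hext, rfl, rfl⟩
  · rintro ⟨j, c, μ₀, hc, hμ₀, rfl, rfl⟩
    exact (spansExtremalRay_Kostka_smul_iff hsep hpointed hϖ hc hK).2 hμ₀

/-- A nonzero pair `(lam, mu) ∈ 𝒦` spans an extremal ray of the Kostka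
cone `𝒦` if and only if there exist an index `j`, a positive rational `c`, and an extreme
point `μ₀` of the intersection polytope `IP_{ϖ_j}`, such that `lam = c•ϖ_j` and
`mu = c•μ₀`. -/
theorem stmt_10 {V : Type*} [AddCommGroup V] [Module ℚ V] {r : ℕ}
    (b : Module.Basis (Fin r) ℚ V) (coroot : Fin r → Module.Dual ℚ V)
    (hdiag : ∀ i, coroot i (b i) = 2)
    (hoff : ∀ i j : Fin r, i ≠ j → coroot j (b i) ≤ 0)
    (hint : ∀ i j : Fin r, ∃ n : ℤ, coroot j (b i) = (n : ℚ))
    (Φ : Set V) (hΦfin : Φ.Finite) (hΦroot : ∀ i, b i ∈ Φ)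
    (hΦrefl : ∀ β ∈ Φ, ∀ i, β - coroot i β • b i ∈ Φ)
    (ϖ : Fin r → V)
    (hϖ : ∀ i j : Fin r, coroot j (ϖ i) = if i = j then 1 else 0)
    (lam mu : V)
    (hK : (lam, mu) ∈ Kostka (⇑b) coroot)
    (hne : (lam, mu) ≠ (0 : V × V)) :
    (∀ p q : V × V, p ∈ Kostka (⇑b) coroot → q ∈ Kostka (⇑b) coroot →
      p + q = (lam, mu) →
        (∃ c : ℚ, 0 ≤ c ∧ p = c • (lam, mu)) ∧
        (∃ c : ℚ, 0 ≤ c ∧ q = c • (lam, mu)))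
    ↔ ∃ (j : Fin r) (c : ℚ) (μ₀ : V), 0 < c ∧
        μ₀ ∈ (IP (⇑b) coroot (ϖ j)).extremePoints ℚ ∧
        lam = c • ϖ j ∧ mu = c • μ₀ :=
  stmt_10_general b coroot hdiag hoff Φ hΦfin hΦroot hΦrefl ϖ hϖ lam mu hK hne
end
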